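/- arXiv:1507.04088 — 6 statements merged into one kernel-verified Lean document; each statement's English description precedes it below -/
import Mathlib

section
/- Let M be a square integer matrix of size μ ≥ 1 such that every row of M has all entries zero except for entries forming one of the multisets {1,1,-2}, {2,-2}, {1,-1}, {1,1}, {1,-2}, {1}, {-1}, {2}, {-2}. Then |det M| ≤ 2^μ. -/
/-- The multiset of nonzero entries of a row `r : Fin μ → ℤ`. -/
def nonzeroEntries {μ : ℕ} (r : Fin μ → ℤ) : Multiset ℤ :=
  (Finset.univ.val.map r).filter (fun x => x ≠ 0)

/-- A row is of one of the nine admissible types. -/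
def admissibleRow {μ : ℕ} (r : Fin μ → ℤ) : Prop :=
  nonzeroEntries r ∈
    ({ {1, 1, -2}, {2, -2}, {1, -1}, {1, 1}, {1, -2}, {1}, {-1}, {2}, {-2} } :
      Set (Multiset ℤ))

namespace Stmt0Aux

/-- Indicator row of an optional index. -/
def indRow {n : ℕ} (a : Option (Fin n)) : Fin n → ℤ := fun j => if a = some j then 1 else 0

/-- Partial inverse of `Fin.succAbove c`. -/
noncomputable def unSucc {n : ℕ} (c : Fin (n+1)) (x : Fin (n+1)) : Option (Fin n) :=
  if h : ∃ k, c.succAbove k = x then some h.choose else none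

lemma unSucc_eq_some_iff {n : ℕ} (c : Fin (n+1)) (x : Fin (n+1)) (j : Fin n) :
    unSucc c x = some j ↔ x = c.succAbove j := by
  unfold unSucc
  split_ifs with h
  · constructor
    · intro he; injection he with he; rw [← h.choose_spec, he]
    · intro he; subst he
      exact congrArg some (Fin.succAbove_right_injective h.choose_spec)
  · constructor
    · intro he; cases he
    · intro he; exact absurd ⟨j, he.symm⟩ h

lemma indRow_unSucc {n : ℕ} (c : Fin (n+1)) (o : Option (Fin (n+1))) (j : Fin n) :
    indRow (o.bind (unSucc c)) j = indRow o (c.succAbove j) := by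
  cases o with
  | none => rfl
  | some x =>
    simp only [Option.bind_some, indRow, unSucc_eq_some_iff, Option.some.injEq]

lemma abs_det_le_of_row {n : ℕ} (M : Matrix (Fin (n+1)) (Fin (n+1)) ℤ) (i c : Fin (n+1))
    (h : ∀ j, j ≠ c → M i j = 0) :
    |M.det| ≤ |M i c| * |(M.submatrix i.succAbove c.succAbove).det| := by
  rw [Matrix.det_succ_row M i,
    Finset.sum_eq_single c (fun j _ hj => by rw [h j hj]; ring) (by simp)]
  rw [abs_mul, abs_mul, abs_pow, abs_neg, abs_one, one_pow, one_mul]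

lemma det_good_le_one : ∀ (n : ℕ) (M : Matrix (Fin n) (Fin n) ℤ),
    (∀ i, ∃ a b : Option (Fin n), M i = fun j => indRow a j - indRow b j) → |M.det| ≤ 1 := by
  intro n
  induction n with
  | zero => intro M _; simp [Matrix.det_fin_zero]
  | succ n ih =>
    intro M hM
    by_cases hall : ∀ i, ∃ ca cb : Fin (n+1), ca ≠ cb ∧
        M i = fun j => indRow (some ca) j - indRow (some cb) j
    · have h1 : Matrix.mulVec M (fun _ => (1:ℤ)) = 0 := by
        funext i
        obtain ⟨ca, cb, hne, hrow⟩ := hall i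
        simp only [Matrix.mulVec, dotProduct, hrow, mul_one, Pi.zero_apply, indRow]
        rw [Finset.sum_sub_distrib]
        simp
      have hd : M.det = 0 := by
        rw [← Matrix.exists_mulVec_eq_zero_iff]
        refine ⟨fun _ => (1:ℤ), ?_, h1⟩
        intro h0
        exact one_ne_zero (congrFun h0 0)
      simp [hd]
    · push_neg at hall
      obtain ⟨i, hi⟩ := hall
      obtain ⟨a, b, hrow⟩ := hM i
      -- find a column c such that all other entries in row i vanish and |M i c| ≤ 1
      have hc : ∃ c : Fin (n+1), (∀ j, j ≠ c → M i j = 0) ∧ |M i c| ≤ 1 := by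
        have hval : ∀ j, M i j = indRow a j - indRow b j := fun j => congrFun hrow j
        match ha : a, hb : b with
        | none, none =>
          exact ⟨i, fun j _ => by rw [hval j]; simp [indRow],
            by rw [hval i]; simp [indRow]⟩
        | some ca, none =>
          refine ⟨ca, fun j hj => by rw [hval j]; simp [indRow, Ne.symm hj], ?_⟩
          rw [hval ca]; simp [indRow]
        | none, some cb =>
          refine ⟨cb, fun j hj => by rw [hval j]; simp [indRow, Ne.symm hj], ?_⟩
          rw [hval cb]; simp [indRow]
        | some ca, some cb =>
          by_cases hab : ca = cb
          · subst hab
            exact ⟨ca, fun j _ => by rw [hval j]; simp [indRow],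
              by rw [hval ca]; simp [indRow]⟩
          · exact absurd (by rw [hrow] : M i = fun j => indRow (some ca) j - indRow (some cb) j)
              (hi ca cb hab)
      obtain ⟨c, hzero, habs⟩ := hc
      have hminor : |(M.submatrix i.succAbove c.succAbove).det| ≤ 1 := by
        refine ih _ fun k => ?_
        obtain ⟨ak, bk, hk⟩ := hM (i.succAbove k)
        refine ⟨ak.bind (unSucc c), bk.bind (unSucc c), ?_⟩
        funext j
        simp only [Matrix.submatrix_apply]
        rw [congrFun hk (c.succAbove j), indRow_unSucc, indRow_unSucc]
      calc |M.det| ≤ |M i c| * |(M.submatrix i.succAbove c.succAbove).det| :=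
            abs_det_le_of_row M i c hzero
        _ ≤ 1 * 1 := mul_le_mul habs hminor (abs_nonneg _) zero_le_one
        _ = 1 := one_mul 1

lemma peel {μ : ℕ} {r : Fin μ → ℤ} {t : Multiset (Fin μ)} {x : ℤ} {s : Multiset ℤ}
    (h : t.map r = x ::ₘ s) : ∃ j t', t = j ::ₘ t' ∧ r j = x ∧ t'.map r = s := by
  have hx : x ∈ t.map r := by rw [h]; exact Multiset.mem_cons_self x s
  obtain ⟨j, hj, hrj⟩ := Multiset.mem_map.mp hx
  obtain ⟨t', rfl⟩ := Multiset.exists_cons_of_mem hj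
  refine ⟨j, t', rfl, hrj, ?_⟩
  rw [Multiset.map_cons, hrj] at h
  exact (Multiset.cons_inj_right x).mp h

lemma nonzeroEntries_eq {μ : ℕ} (r : Fin μ → ℤ) :
    nonzeroEntries r = (Finset.univ.val.filter (fun j => r j ≠ 0)).map r := by
  unfold nonzeroEntries
  rw [Multiset.filter_map]
  rfl

lemma extract1 {μ : ℕ} {r : Fin μ → ℤ} {x : ℤ} (h : nonzeroEntries r = {x}) :
    ∃ j1 : Fin μ, r j1 = x ∧ ∀ j, j ≠ j1 → r j = 0 := by
  have h1 : (Finset.univ.val.filter (fun j => r j ≠ 0)).map r = x ::ₘ 0 := by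
    rw [← nonzeroEntries_eq, h]; rfl
  obtain ⟨j1, t1, heq1, hv1, hm1⟩ := peel h1
  have ht1 : t1 = 0 := Multiset.map_eq_zero.mp hm1
  refine ⟨j1, hv1, fun j hj => ?_⟩
  by_contra hr
  have : j ∈ Finset.univ.val.filter (fun j => r j ≠ 0) :=
    Multiset.mem_filter.mpr ⟨Finset.mem_univ j, hr⟩
  rw [heq1, ht1] at this
  simp at this
  exact hj this

lemma extract2 {μ : ℕ} {r : Fin μ → ℤ} {x y : ℤ} (h : nonzeroEntries r = {x, y}) :
    ∃ j1 j2 : Fin μ, j1 ≠ j2 ∧ r j1 = x ∧ r j2 = y ∧ ∀ j, j ≠ j1 → j ≠ j2 → r j = 0 := by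
  have hnd : (Finset.univ.val.filter (fun j => r j ≠ 0)).Nodup :=
    Multiset.Nodup.filter _ Finset.univ.nodup
  have h1 : (Finset.univ.val.filter (fun j => r j ≠ 0)).map r = x ::ₘ y ::ₘ 0 := by
    rw [← nonzeroEntries_eq, h]; rfl
  obtain ⟨j1, t1, heq1, hv1, hm1⟩ := peel h1
  obtain ⟨j2, t2, heq2, hv2, hm2⟩ := peel hm1
  have ht2 : t2 = 0 := Multiset.map_eq_zero.mp hm2
  rw [heq1, heq2, ht2] at hnd
  simp only [Multiset.nodup_cons, Multiset.mem_cons, Multiset.notMem_zero] at hnd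
  refine ⟨j1, j2, fun he => hnd.1 (by simp [he]), hv1, hv2, fun j hja hjb => ?_⟩
  by_contra hr
  have : j ∈ Finset.univ.val.filter (fun j => r j ≠ 0) :=
    Multiset.mem_filter.mpr ⟨Finset.mem_univ j, hr⟩
  rw [heq1, heq2, ht2] at this
  simp only [Multiset.mem_cons, Multiset.notMem_zero, or_false] at this
  rcases this with h' | h' <;> [exact hja h'; exact hjb h']

lemma extract3 {μ : ℕ} {r : Fin μ → ℤ} {x y z : ℤ} (h : nonzeroEntries r = {x, y, z}) :
    ∃ j1 j2 j3 : Fin μ, j1 ≠ j2 ∧ j1 ≠ j3 ∧ j2 ≠ j3 ∧ r j1 = x ∧ r j2 = y ∧ r j3 = z ∧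
      ∀ j, j ≠ j1 → j ≠ j2 → j ≠ j3 → r j = 0 := by
  have hnd : (Finset.univ.val.filter (fun j => r j ≠ 0)).Nodup :=
    Multiset.Nodup.filter _ Finset.univ.nodup
  have h1 : (Finset.univ.val.filter (fun j => r j ≠ 0)).map r = x ::ₘ y ::ₘ z ::ₘ 0 := by
    rw [← nonzeroEntries_eq, h]; rfl
  obtain ⟨j1, t1, heq1, hv1, hm1⟩ := peel h1
  obtain ⟨j2, t2, heq2, hv2, hm2⟩ := peel hm1
  obtain ⟨j3, t3, heq3, hv3, hm3⟩ := peel hm2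
  have ht3 : t3 = 0 := Multiset.map_eq_zero.mp hm3
  rw [heq1, heq2, heq3, ht3] at hnd
  simp only [Multiset.nodup_cons, Multiset.mem_cons, Multiset.notMem_zero, or_false] at hnd
  refine ⟨j1, j2, j3, fun he => hnd.1 (Or.inl he),
    fun he => hnd.1 (Or.inr he),
    fun he => hnd.2.1 he, hv1, hv2, hv3, fun j hja hjb hjc => ?_⟩
  by_contra hr
  have : j ∈ Finset.univ.val.filter (fun j => r j ≠ 0) :=
    Multiset.mem_filter.mpr ⟨Finset.mem_univ j, hr⟩
  rw [heq1, heq2, heq3, ht3] at this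
  simp only [Multiset.mem_cons, Multiset.notMem_zero, or_false] at this
  rcases this with h' | h' | h' <;> [exact hja h'; exact hjb h'; exact hjc h']

lemma exists_decomp {μ : ℕ} {r : Fin μ → ℤ} (h : admissibleRow r) :
    ∃ a b a' b' : Option (Fin μ),
      r = fun j => (indRow a j - indRow b j) + (indRow a' j - indRow b' j) := by
  simp only [admissibleRow, Set.mem_insert_iff, Set.mem_singleton_iff] at h
  rcases h with h | h | h | h | h | h | h | h | h
  · -- {1, 1, -2}
    obtain ⟨j1, j2, j3, h12, h13, h23, hv1, hv2, hv3, h0⟩ := extract3 h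
    refine ⟨some j1, some j3, some j2, some j3, funext fun j => ?_⟩
    rcases eq_or_ne j j1 with rfl | n1
    · simp [indRow, hv1, Ne.symm h12, Ne.symm h13]
    rcases eq_or_ne j j2 with rfl | n2
    · simp [indRow, hv2, h12, Ne.symm h23]
    rcases eq_or_ne j j3 with rfl | n3
    · rw [hv3]; simp [indRow, h13, h23]
    · rw [h0 j n1 n2 n3]; simp [indRow, Ne.symm n1, Ne.symm n2, Ne.symm n3]
  · -- {2, -2}
    obtain ⟨j1, j2, h12, hv1, hv2, h0⟩ := extract2 h
    refine ⟨some j1, some j2, some j1, some j2, funext fun j => ?_⟩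
    rcases eq_or_ne j j1 with rfl | n1
    · simp [indRow, hv1, Ne.symm h12]
    rcases eq_or_ne j j2 with rfl | n2
    · rw [hv2]; simp [indRow, h12]
    · rw [h0 j n1 n2]; simp [indRow, Ne.symm n1, Ne.symm n2]
  · -- {1, -1}
    obtain ⟨j1, j2, h12, hv1, hv2, h0⟩ := extract2 h
    refine ⟨some j1, some j2, none, none, funext fun j => ?_⟩
    rcases eq_or_ne j j1 with rfl | n1
    · simp [indRow, hv1, Ne.symm h12]
    rcases eq_or_ne j j2 with rfl | n2
    · rw [hv2]; simp [indRow, h12]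
    · rw [h0 j n1 n2]; simp [indRow, Ne.symm n1, Ne.symm n2]
  · -- {1, 1}
    obtain ⟨j1, j2, h12, hv1, hv2, h0⟩ := extract2 h
    refine ⟨some j1, none, some j2, none, funext fun j => ?_⟩
    rcases eq_or_ne j j1 with rfl | n1
    · simp [indRow, hv1, Ne.symm h12]
    rcases eq_or_ne j j2 with rfl | n2
    · rw [hv2]; simp [indRow, h12]
    · rw [h0 j n1 n2]; simp [indRow, Ne.symm n1, Ne.symm n2]
  · -- {1, -2}
    obtain ⟨j1, j2, h12, hv1, hv2, h0⟩ := extract2 h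
    refine ⟨some j1, some j2, none, some j2, funext fun j => ?_⟩
    rcases eq_or_ne j j1 with rfl | n1
    · simp [indRow, hv1, Ne.symm h12]
    rcases eq_or_ne j j2 with rfl | n2
    · rw [hv2]; simp [indRow, h12]
    · rw [h0 j n1 n2]; simp [indRow, Ne.symm n1, Ne.symm n2]
  · -- {1}
    obtain ⟨j1, hv1, h0⟩ := extract1 h
    refine ⟨some j1, none, none, none, funext fun j => ?_⟩
    rcases eq_or_ne j j1 with rfl | n1
    · simp [indRow, hv1]
    · rw [h0 j n1]; simp [indRow, Ne.symm n1]
  · -- {-1}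
    obtain ⟨j1, hv1, h0⟩ := extract1 h
    refine ⟨none, some j1, none, none, funext fun j => ?_⟩
    rcases eq_or_ne j j1 with rfl | n1
    · rw [hv1]; simp [indRow]
    · rw [h0 j n1]; simp [indRow, Ne.symm n1]
  · -- {2}
    obtain ⟨j1, hv1, h0⟩ := extract1 h
    refine ⟨some j1, none, some j1, none, funext fun j => ?_⟩
    rcases eq_or_ne j j1 with rfl | n1
    · rw [hv1]; simp [indRow]
    · rw [h0 j n1]; simp [indRow, Ne.symm n1]
  · -- {-2}
    obtain ⟨j1, hv1, h0⟩ := extract1 h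
    refine ⟨none, some j1, none, some j1, funext fun j => ?_⟩
    rcases eq_or_ne j j1 with rfl | n1
    · rw [hv1]; simp [indRow]
    · rw [h0 j n1]; simp [indRow, Ne.symm n1]

end Stmt0Aux

open Stmt0Aux in
theorem stmt_0 (μ : ℕ) (hμ : 1 ≤ μ) (M : Matrix (Fin μ) (Fin μ) ℤ)
    (hrows : ∀ i, admissibleRow (M i)) :
    |M.det| ≤ 2 ^ μ := by
  classical
  choose a b a' b' hab using fun i => exists_decomp (hrows i)
  set U : Matrix (Fin μ) (Fin μ) ℤ := fun i j => indRow (a i) j - indRow (b i) j with hU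
  set V : Matrix (Fin μ) (Fin μ) ℤ := fun i j => indRow (a' i) j - indRow (b' i) j with hV
  have hMUV : M = U + V := by
    funext i j
    rw [congrFun (hab i) j]
    rfl
  have key : M.det = ∑ s : Finset (Fin μ), Matrix.det (s.piecewise U V) := by
    rw [hMUV]
    exact (Matrix.detRowAlternating (R := ℤ) (n := Fin μ)).toMultilinearMap.map_add_univ U V
  rw [key]
  calc |∑ s : Finset (Fin μ), Matrix.det (s.piecewise U V)|
      ≤ ∑ s : Finset (Fin μ), |Matrix.det (s.piecewise U V)| :=
        Finset.abs_sum_le_sum_abs _ _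
    _ ≤ ∑ _s : Finset (Fin μ), (1 : ℤ) := by
        refine Finset.sum_le_sum fun s _ => ?_
        refine det_good_le_one μ _ fun i => ?_
        by_cases hi : i ∈ s
        · exact ⟨a i, b i, by simp [Finset.piecewise, hi, hU]⟩
        · exact ⟨a' i, b' i, by simp [Finset.piecewise, hi, hV]⟩
    _ = 2 ^ μ := by
        rw [Finset.sum_const, Finset.card_univ, Fintype.card_finset, Fintype.card_fin]
        simp
end

section
/- Let n ≥ 2 be a natural number with prime factorization involving primes p₁,…,p_s. Let D be a diagonal m×m integer matrix with diagonal entries d₁,…,d_m, all nonzero, and suppose the (m)×(m+1) matrix A' = (D | 0) admits a vector y = (y₁,…,y_m,0) with A'y ≡ 0 (mod n) such that y is n-effective (i.e., for every prime p dividing n, not all entries of y are congruent to each other mod p). Then det D ≡ 0 (mod n). -/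
/-- A vector is `p`-trivial if all its entries are congruent mod `p`. -/
def pTrivial (p : ℕ) {k : ℕ} (x : Fin k → ℤ) : Prop :=
  ∀ i j, x i ≡ x j [ZMOD (p : ℤ)]

/-- A vector is `n`-effective if it is not `p`-trivial for any prime `p` dividing `n`. -/
def nEffective (n : ℕ) {k : ℕ} (x : Fin k → ℤ) : Prop :=
  ∀ p : ℕ, p.Prime → p ∣ n → ¬ pTrivial p x

theorem stmt_2 (n : ℕ) (hn : 2 ≤ n) (m : ℕ) (d : Fin m → ℤ)
    (hd : ∀ i, d i ≠ 0)
    -- `A'` is the diagonal matrix `D = diagonal d` with a zero column appended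
    (A' : Matrix (Fin m) (Fin (m + 1)) ℤ)
    (hA' : ∀ i j, A' i j = if (j : ℕ) = (i : ℕ) then d i else 0)
    (y : Fin (m + 1) → ℤ)
    (hylast : y (Fin.last m) = 0)
    (hsol : ∀ i, (∑ j, A' i j * y j) ≡ 0 [ZMOD (n : ℤ)])
    (heff : nEffective n y) :
    (Matrix.diagonal d).det ≡ 0 [ZMOD (n : ℤ)] := by
  have hsum : ∀ i, (∑ j, A' i j * y j) = d i * y (Fin.castSucc i) := by
    intro i
    rw [Finset.sum_eq_single (Fin.castSucc i)]
    · simp [hA']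
    · intro j _ hj
      rw [hA', if_neg, zero_mul]
      intro h
      exact hj (Fin.ext (by simpa using h))
    · simp
  have hdvd : ∀ i, (n : ℤ) ∣ d i * y (Fin.castSucc i) := by
    intro i
    have := (hsol i)
    rw [hsum i] at this
    exact Int.dvd_of_emod_eq_zero (by simpa [Int.ModEq] using this)
  suffices h : (n : ℤ) ∣ ∏ i, d i by
    have : (Matrix.diagonal d).det = ∏ i, d i := Matrix.det_diagonal
    rw [this]
    exact (Int.modEq_zero_iff_dvd).mpr h
  have hnat : n ∣ (∏ i, d i).natAbs := by
    rw [Nat.dvd_iff_prime_pow_dvd_dvd]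
    intro p k hp hpk
    rcases k with _ | k
    · simp
    have hp' : p ∣ n := dvd_trans (dvd_pow_self p (Nat.succ_ne_zero k)) hpk
    obtain ⟨i, hi⟩ : ∃ i : Fin m, ¬ (p : ℤ) ∣ y (Fin.castSucc i) := by
      by_contra hall
      push_neg at hall
      apply heff p hp hp'
      have hdivall : ∀ a : Fin (m + 1), (p : ℤ) ∣ y a := by
        intro a
        induction a using Fin.lastCases with
        | last => simp [hylast]
        | cast i => exact hall i
      intro a b
      exact (Int.modEq_zero_iff_dvd.mpr (hdivall a)).trans
        (Int.modEq_zero_iff_dvd.mpr (hdivall b)).symm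
    have hpprime : Prime (p : ℤ) := Nat.prime_iff_prime_int.mp hp
    have hpow : (p : ℤ) ^ (k + 1) ∣ d i * y (Fin.castSucc i) := by
      refine dvd_trans ?_ (hdvd i)
      exact_mod_cast Int.natCast_dvd_natCast.mpr hpk
    have hdi : (p : ℤ) ^ (k + 1) ∣ d i := hpprime.pow_dvd_of_dvd_mul_right _ hi hpow
    have hprod : (p : ℤ) ^ (k + 1) ∣ ∏ j, d j :=
      hdi.trans (Finset.dvd_prod_of_mem d (Finset.mem_univ i))
    have h2 := Int.natAbs_dvd_natAbs.mpr hprod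
    simpa [Int.natAbs_pow] using h2
  have := Int.natCast_dvd_natCast.mpr hnat
  exact (Int.dvd_natAbs).mp this
end

section
/- Let n ≥ 2 and let d₁,…,d_m be nonzero integers. Suppose there exists a vector (y₁,…,y_m,0) ∈ ℤ^{m+1} that is n-effective (not p-trivial for any prime p | n) and satisfies d_i y_i ≡ 0 (mod n) for all i. Then n ≤ |d₁ ⋯ d_m|. -/
theorem pTrivial_of_forall_dvd {p k : ℕ} {x : Fin k → ℤ} (h : ∀ i, (p : ℤ) ∣ x i) :
    pTrivial p x :=
  fun i j => Int.modEq_iff_dvd.mpr (dvd_sub (h j) (h i))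

namespace nEffective

variable {n p : ℕ}

theorem exists_not_dvd {k : ℕ} {x : Fin k → ℤ} (hx : nEffective n x) (hp : p.Prime)
    (hpn : p ∣ n) : ∃ i, ¬ (p : ℤ) ∣ x i := by
  by_contra! h
  exact hx p hp hpn (pTrivial_of_forall_dvd h)

theorem exists_castSucc_not_dvd {m : ℕ} {y : Fin (m + 1) → ℤ} (hy : nEffective n y)
    (hlast : y (Fin.last m) = 0) (hp : p.Prime) (hpn : p ∣ n) :
    ∃ i : Fin m, ¬ (p : ℤ) ∣ y i.castSucc := by
  obtain ⟨i, hi⟩ := hy.exists_not_dvd hp hpn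
  have hi_ne : i ≠ Fin.last m := by
    rintro rfl
    exact hi (hlast ▸ dvd_zero _)
  obtain ⟨j, rfl⟩ := Fin.exists_castSucc_eq.mpr hi_ne
  exact ⟨j, hi⟩

end nEffective

theorem Int.natCast_dvd_prod_of_forall_prime_exists_not_dvd {ι : Type*} {s : Finset ι} {n : ℕ}
    {d : ι → ℤ} (y : ι → ℤ) (hy : ∀ p : ℕ, p.Prime → p ∣ n → ∃ i ∈ s, ¬ (p : ℤ) ∣ y i)
    (hdy : ∀ i ∈ s, (n : ℤ) ∣ d i * y i) : (n : ℤ) ∣ ∏ i ∈ s, d i := by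
  rw [Int.natCast_dvd, Nat.dvd_iff_prime_pow_dvd_dvd]
  intro p k hp hpk
  rcases k.eq_zero_or_pos with rfl | hk
  · simp
  obtain ⟨i, hi, hpy⟩ := hy p hp ((dvd_pow_self p hk.ne').trans hpk)
  have hpk_dy : (p : ℤ) ^ k ∣ d i * y i := by
    exact_mod_cast (Int.natCast_dvd_natCast.mpr hpk).trans (hdy i hi)
  have hpk_d : (p : ℤ) ^ k ∣ d i :=
    (Nat.prime_iff_prime_int.mp hp).pow_dvd_of_dvd_mul_right k hpy hpk_dy
  simpa [Int.natAbs_pow] using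
    Int.natAbs_dvd_natAbs.mpr (hpk_d.trans (Finset.dvd_prod_of_mem d hi))

theorem stmt_3_general (n : ℕ) (m : ℕ) (d : Fin m → ℤ)
    (hd : ∀ i, d i ≠ 0)
    (y : Fin (m + 1) → ℤ)
    (hylast : y (Fin.last m) = 0)
    (heff : nEffective n y)
    (hsol : ∀ i : Fin m, d i * y i.castSucc ≡ 0 [ZMOD (n : ℤ)]) :
    (n : ℤ) ≤ |∏ i, d i| := by
  have hdvd : (n : ℤ) ∣ ∏ i, d i :=
    Int.natCast_dvd_prod_of_forall_prime_exists_not_dvd (fun i => y i.castSucc)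
      (fun p hp hpn => by simpa using heff.exists_castSucc_not_dvd hylast hp hpn)
      (fun i _ => Int.modEq_zero_iff_dvd.mp (hsol i))
  have hprod : ∏ i, d i ≠ 0 := Finset.prod_ne_zero_iff.mpr fun i _ => hd i
  exact Int.le_of_dvd (abs_pos.mpr hprod) ((dvd_abs _ _).mpr hdvd)

theorem stmt_3 (n : ℕ) (hn : 2 ≤ n) (m : ℕ) (d : Fin m → ℤ)
    (hd : ∀ i, d i ≠ 0)
    (y : Fin (m + 1) → ℤ)
    (hylast : y (Fin.last m) = 0)
    (heff : nEffective n y)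
    (hsol : ∀ i : Fin m, d i * y i.castSucc ≡ 0 [ZMOD (n : ℤ)]) :
    (n : ℤ) ≤ |∏ i, d i| :=
  stmt_3_general n m d hd y hylast heff hsol
end

section
/- Let n ≥ 2, k ≥ 3, and let a₁,…,a_{k-1} ∈ ℤ^{k-1}. Let A = (a₁,…,a_{k-1},0) and let A' be obtained from A by adding λ times column j to column i (for i,j ≤ k-1, i ≠ j, λ ∈ ℤ). Then A x ≡ 0 (mod n) has an n-effective solution with last entry 0 if and only if A' x ≡ 0 (mod n) has an n-effective solution with last entry 0. -/
/-- `x` is a solution of `A x ≡ 0 (mod n)`. -/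
def isSolMod (n : ℕ) {r c : ℕ} (A : Matrix (Fin r) (Fin c) ℤ) (x : Fin c → ℤ) : Prop :=
  ∀ i, (∑ j, A i j * x j) ≡ 0 [ZMOD (n : ℤ)]

/- Here `k = m + 1` with `m ≥ 2`, so `k ≥ 3`; the last column of `A` is zero, and `A'`
is obtained from `A` by adding `λ` times column `j` to column `i` (with `i, j ≠ last`). -/
lemma key (n : ℕ) (m : ℕ)
    (A : Matrix (Fin m) (Fin (m + 1)) ℤ)
    (i j : Fin (m + 1)) (hj : j ≠ Fin.last m) (hij : i ≠ j)
    (lam : ℤ)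
    (A' : Matrix (Fin m) (Fin (m + 1)) ℤ)
    (hA' : ∀ r c, A' r c = if c = i then A r i + lam * A r j else A r c) :
    (∃ x : Fin (m + 1) → ℤ, nEffective n x ∧ x (Fin.last m) = 0 ∧ isSolMod n A x) →
    (∃ x : Fin (m + 1) → ℤ, nEffective n x ∧ x (Fin.last m) = 0 ∧ isSolMod n A' x) := by
  rintro ⟨x, hx, hlast, hsol⟩
  set y : Fin (m + 1) → ℤ := Function.update x j (x j - lam * x i) with hy
  have hyj : y j = x j - lam * x i := Function.update_self _ _ _
  have hyc : ∀ c, c ≠ j → y c = x c := fun c hc => Function.update_of_ne hc _ _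
  refine ⟨y, ?_, ?_, ?_⟩
  · intro p hp hpn htriv
    apply hx p hp hpn
    have hy0 : ∀ c, y c ≡ 0 [ZMOD (p : ℤ)] := by
      intro c
      have := htriv c (Fin.last m)
      rwa [hyc _ (Ne.symm hj), hlast] at this
    have hx0 : ∀ c, x c ≡ 0 [ZMOD (p : ℤ)] := by
      intro c
      by_cases hc : c = j
      · rw [hc]
        have h1 := hy0 j
        rw [hyj] at h1
        have h2 := hy0 i
        rw [hyc _ hij] at h2
        calc x j = (x j - lam * x i) + lam * x i := by ring
          _ ≡ 0 + lam * 0 [ZMOD (p : ℤ)] := Int.ModEq.add h1 (Int.ModEq.mul_left _ h2)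
          _ = 0 := by ring
      · rw [← hyc _ hc]; exact hy0 c
    intro a b
    exact (hx0 a).trans (hx0 b).symm
  · rw [hyc _ (Ne.symm hj), hlast]
  · intro r
    have : (∑ c, A' r c * y c) = ∑ c, A r c * x c := by
      have hsum : (∑ c, (A' r c * y c - A r c * x c)) = 0 := by
        rw [← Finset.sum_subset (Finset.subset_univ ({i, j} : Finset (Fin (m+1))))]
        · rw [Finset.sum_pair hij, hA' r i, hA' r j, if_pos rfl, if_neg (Ne.symm hij),
            hyc _ hij, hyj]
          ring
        · intro c _ hc
          simp only [Finset.mem_insert, Finset.mem_singleton, not_or] at hc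
          rw [hA' r c, if_neg hc.1, hyc _ hc.2]
          ring
      rwa [Finset.sum_sub_distrib, sub_eq_zero] at hsum
    rw [this]
    exact hsol r

theorem stmt_5 (n : ℕ) (hn : 2 ≤ n) (m : ℕ) (hm : 2 ≤ m)
    (A : Matrix (Fin m) (Fin (m + 1)) ℤ)
    (hlastcol : ∀ r, A r (Fin.last m) = 0)
    (i j : Fin (m + 1)) (hi : i ≠ Fin.last m) (hj : j ≠ Fin.last m) (hij : i ≠ j)
    (lam : ℤ)
    (A' : Matrix (Fin m) (Fin (m + 1)) ℤ)
    (hA' : ∀ r c, A' r c = if c = i then A r i + lam * A r j else A r c) :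
    (∃ x : Fin (m + 1) → ℤ, nEffective n x ∧ x (Fin.last m) = 0 ∧ isSolMod n A x) ↔
      (∃ x : Fin (m + 1) → ℤ, nEffective n x ∧ x (Fin.last m) = 0 ∧ isSolMod n A' x) := by
  constructor
  · exact key n m A i j hj hij lam A' hA'
  · apply key n m A' i j hj hij (-lam) A
    intro r c
    by_cases hc : c = i
    · rw [hc, if_pos rfl, hA' r i, hA' r j, if_pos rfl, if_neg (Ne.symm hij)]
      ring
    · rw [if_neg hc, hA' r c, if_neg hc]
end

section
/- Let n ≥ 2, k ≥ 3, and let a₁,…,a_{k-1} ∈ ℤ^{k-1}. Let A = (a₁,…,a_{k-1},0) and let A' be obtained from A by negating column i (i ≤ k-1). If A x ≡ 0 (mod n) has an n-effective solution with last entry 0, then so does A' x ≡ 0 (mod n). -/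
/- Here `k = m + 1` with `m ≥ 2`, so `k ≥ 3`; the last column of `A` is zero, and `A'`
is obtained from `A` by negating column `i` (with `i ≠ last`). -/
theorem stmt_7 (n : ℕ) (hn : 2 ≤ n) (m : ℕ) (hm : 2 ≤ m)
    (A : Matrix (Fin m) (Fin (m + 1)) ℤ)
    (hlastcol : ∀ r, A r (Fin.last m) = 0)
    (i : Fin (m + 1)) (hi : i ≠ Fin.last m)
    (A' : Matrix (Fin m) (Fin (m + 1)) ℤ)
    (hA' : ∀ r c, A' r c = if c = i then -A r c else A r c)
    (hex : ∃ x : Fin (m + 1) → ℤ, nEffective n x ∧ x (Fin.last m) = 0 ∧ isSolMod n A x) :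
    ∃ x : Fin (m + 1) → ℤ, nEffective n x ∧ x (Fin.last m) = 0 ∧ isSolMod n A' x := by

  obtain ⟨x, hxe, hxl, hxs⟩ := hex
  refine ⟨fun j => if j = i then -x j else x j, ?_, ?_, ?_⟩
  · intro p hp hpn ht
    apply hxe p hp hpn
    have key : ∀ a, x a ≡ 0 [ZMOD (p : ℤ)] := by
      intro a
      by_cases ha : a = i
      · have := ht i (Fin.last m)
        simp [ha, hi, hxl] at this
        have : -x i ≡ 0 [ZMOD (p : ℤ)] := this
        subst ha
        calc x a = -(-x a) := by ring
          _ ≡ -0 [ZMOD (p : ℤ)] := Int.ModEq.neg this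
          _ = 0 := by ring
      · have := ht a (Fin.last m)
        simpa [ha, hi, hxl] using this
    intro a b
    exact (key a).trans (key b).symm
  · simp [hi.symm, hxl]
  · intro r
    have : (∑ j, A' r j * (if j = i then -x j else x j)) = ∑ j, A r j * x j := by
      apply Finset.sum_congr rfl
      intro j _
      rw [hA']
      by_cases hj : j = i <;> simp [hj] <;> ring
    rw [this]
    exact hxs r
end

section
/- Let n ≥ 2 and let A be a (l-1)×l integer matrix of rank l-1 whose columns sum to zero and each of whose rows has nonzero entries forming one of the multisets {1,1,-2}, {2,-2}, {1,-1}, {1,1}, {1,-2}, {1}, {-1}, {2}, {-2}. If the system A y ≡ 0 (mod n) admits an n-effective solution, then n ≤ 2^{l-1}. -/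
open Matrix Finset

/-- Rows with at most one entry `1`, at most one entry `-1` and all other entries `0`, as in the
transposed incidence matrix of a directed graph whose arcs may lack endpoints. -/
def IsIncidenceRow {ι : Type*} (r : ι → ℤ) : Prop :=
  (∀ j, |r j| ≤ 1) ∧ Pairwise fun j j' => r j * r j' ≤ 0

namespace IsIncidenceRow

variable {ι : Type*} {r : ι → ℤ}

lemma comp {κ : Type*} (hr : IsIncidenceRow r) {f : κ → ι} (hf : Function.Injective f) :
    IsIncidenceRow (r ∘ f) :=
  ⟨fun j => hr.1 (f j), hr.2.comp_of_injective hf⟩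

lemma single_sub_single [DecidableEq ι] (a c : ι) :
    IsIncidenceRow (Pi.single a 1 - Pi.single c 1 : ι → ℤ) := by
  refine ⟨fun j => ?_, fun j j' hjj' => ?_⟩
  · simp only [Pi.sub_apply, Pi.single_apply]
    split_ifs <;> norm_num
  · simp only [Pi.sub_apply, Pi.single_apply]
    split_ifs <;> simp_all

lemma exists_forall_ne_eq_zero [Fintype ι] (hr : IsIncidenceRow r) (hs : ∑ j, r j ≠ 0) :
    ∃ c, ∀ j ≠ c, r j = 0 := by
  by_contra! H
  obtain ⟨a, -, ha⟩ := Finset.exists_ne_zero_of_sum_ne_zero hs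
  obtain ⟨b, hba, hb⟩ := H a
  have entry : ∀ j, r j = -1 ∨ r j = 0 ∨ r j = 1 := fun j => by
    have := abs_le.mp (hr.1 j); omega
  have hab : r b = - r a := by
    have := hr.2 hba
    rcases entry a with h | h | h <;> rcases entry b with h' | h' | h' <;> simp_all
  apply hs
  rw [Finset.sum_eq_add_of_mem a b (mem_univ _) (mem_univ _) hba.symm, hab, add_neg_cancel]
  rintro j - ⟨hja, hjb⟩
  have h₁ : r j * r a ≤ 0 := hr.2 hja
  have h₂ : r j * r b ≤ 0 := hr.2 hjb
  rw [hab] at h₂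
  rcases entry a with h | h | h <;> rcases entry j with h' | h' | h' <;> simp_all

end IsIncidenceRow

/-- Expand along a row with nonzero sum, which has at most one nonzero entry; if every row sums
to zero, the all-ones vector lies in the kernel. -/
theorem abs_det_le_one_of_isIncidenceRow {k : ℕ} (M : Matrix (Fin k) (Fin k) ℤ)
    (hM : ∀ i, IsIncidenceRow (M i)) : |M.det| ≤ 1 := by
  induction k with
  | zero => simp
  | succ k ih =>
    by_cases hsum : ∀ i, ∑ j, M i j = 0
    · have : M.det = 0 := Matrix.exists_mulVec_eq_zero_iff.mp
        ⟨fun _ => 1, fun h => one_ne_zero (congrFun h 0), funext fun i => by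
          simpa [Matrix.mulVec, dotProduct] using hsum i⟩
      simp [this]
    obtain ⟨i, hi⟩ := not_forall.mp hsum
    obtain ⟨c, hc⟩ := (hM i).exists_forall_ne_eq_zero hi
    rw [Matrix.det_succ_row M i, Finset.sum_eq_single c (fun j _ hj => by simp [hc j hj])
      (by simp), abs_mul, abs_mul, abs_pow, abs_neg, abs_one, one_pow, one_mul]
    exact mul_le_one₀ ((hM i).1 c) (abs_nonneg _)
      (ih _ fun i' => (hM _).comp (Fin.succAbove_right_injective))

theorem abs_det_add_le_two_pow {k : ℕ} (U V : Matrix (Fin k) (Fin k) ℤ)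
    (hU : ∀ i, IsIncidenceRow (U i)) (hV : ∀ i, IsIncidenceRow (V i)) :
    |(U + V).det| ≤ 2 ^ k := by
  have hexpand : (U + V).det
      = ∑ s : Finset (Fin k), det (s.piecewise U V : Matrix (Fin k) (Fin k) ℤ) :=
    (detRowAlternating : (Fin k → ℤ) [⋀^Fin k]→ₗ[ℤ] ℤ).map_add_univ U V
  calc |(U + V).det|
        ≤ ∑ s : Finset (Fin k), |det (s.piecewise U V : Matrix (Fin k) (Fin k) ℤ)| := by
        rw [hexpand]; exact Finset.abs_sum_le_sum_abs _ _
    _ ≤ ∑ _s : Finset (Fin k), (1 : ℤ) := by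
        gcongr with s
        exact abs_det_le_one_of_isIncidenceRow _ fun i =>
          s.piecewise_cases U V IsIncidenceRow (hU i) (hV i)
    _ = 2 ^ k := by simp

section NonzeroEntries

variable {μ : ℕ} {r : Fin μ → ℤ}

lemma sum_nonzeroEntries (r : Fin μ → ℤ) : (nonzeroEntries r).sum = ∑ j, r j := by
  rw [nonzeroEntries, Multiset.filter_map, ← Finset.sum_filter_ne_zero]
  rfl

lemma eq_zero_of_nonzeroEntries_eq_zero (h : nonzeroEntries r = 0) : r = 0 := by
  funext j
  by_contra hj
  have : r j ∈ nonzeroEntries r :=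
    Multiset.mem_filter.mpr ⟨Multiset.mem_map_of_mem r (Finset.mem_univ_val j), hj⟩
  simp [h] at this

lemma nonzeroEntries_eq_cons_update (a : Fin μ) (ha : r a ≠ 0) :
    nonzeroEntries r = r a ::ₘ nonzeroEntries (Function.update r a 0) := by
  have hrest : (Finset.univ.val.erase a).map r
      = (Finset.univ.val.erase a).map (Function.update r a 0) :=
    Multiset.map_congr rfl fun j hj => (Function.update_of_ne
      ((Multiset.Nodup.mem_erase_iff Finset.univ.nodup).mp hj).1 _ _).symm
  rw [nonzeroEntries, nonzeroEntries, ← Multiset.cons_erase (Finset.mem_univ_val a),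
    Multiset.map_cons, Multiset.map_cons, hrest]
  simp [ha]

lemma exists_eq_single_add_of_nonzeroEntries_eq_cons {x : ℤ} {s : Multiset ℤ}
    (h : nonzeroEntries r = x ::ₘ s) :
    ∃ a r', r = Pi.single a x + r' ∧ nonzeroEntries r' = s := by
  obtain ⟨hmem, hx⟩ := Multiset.mem_filter.mp (h ▸ Multiset.mem_cons_self x s)
  obtain ⟨a, -, rfl⟩ := Multiset.mem_map.mp hmem
  refine ⟨a, Function.update r a 0, ?_, ?_⟩
  · rw [Pi.update_eq_sub_add_single, Pi.single_zero, add_zero, add_sub_cancel]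
  · rwa [nonzeroEntries_eq_cons_update a hx, Multiset.cons_inj_right] at h

lemma admissibleRow.exists_eq_single_sub_add_single_sub (hr : admissibleRow r)
    (hs : ∑ j, r j = 0) : ∃ a b c d : Fin μ,
      r = (Pi.single a 1 - Pi.single c 1) + (Pi.single b 1 - Pi.single d 1) := by
  have hsum := sum_nonzeroEntries r
  rw [hs] at hsum
  simp only [admissibleRow, Set.mem_insert_iff, Set.mem_singleton_iff] at hr
  rcases hr with h | h | h | h
  · obtain ⟨a, r₁, rfl, h₁⟩ := exists_eq_single_add_of_nonzeroEntries_eq_cons h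
    obtain ⟨b, r₂, rfl, h₂⟩ := exists_eq_single_add_of_nonzeroEntries_eq_cons h₁
    obtain ⟨c, r₃, rfl, h₃⟩ := exists_eq_single_add_of_nonzeroEntries_eq_cons h₂
    obtain rfl := eq_zero_of_nonzeroEntries_eq_zero h₃
    refine ⟨a, b, c, c, funext fun j => ?_⟩
    simp only [Pi.add_apply, Pi.sub_apply, Pi.zero_apply, Pi.single_apply]
    grind
  · obtain ⟨a, r₁, rfl, h₁⟩ := exists_eq_single_add_of_nonzeroEntries_eq_cons h
    obtain ⟨c, r₂, rfl, h₂⟩ := exists_eq_single_add_of_nonzeroEntries_eq_cons h₁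
    obtain rfl := eq_zero_of_nonzeroEntries_eq_zero h₂
    refine ⟨a, a, c, c, funext fun j => ?_⟩
    simp only [Pi.add_apply, Pi.sub_apply, Pi.zero_apply, Pi.single_apply]
    grind
  · obtain ⟨a, r₁, rfl, h₁⟩ := exists_eq_single_add_of_nonzeroEntries_eq_cons h
    obtain ⟨c, r₂, rfl, h₂⟩ := exists_eq_single_add_of_nonzeroEntries_eq_cons h₁
    obtain rfl := eq_zero_of_nonzeroEntries_eq_zero h₂
    refine ⟨a, a, c, a, funext fun j => ?_⟩
    simp only [Pi.add_apply, Pi.sub_apply, Pi.zero_apply, Pi.single_apply]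
    grind
  · rcases h with h | h | h | h | h | h <;> rw [h] at hsum <;> norm_num at hsum

end NonzeroEntries

lemma Matrix.det_ne_zero_of_rank_eq_card {K n : Type*} [Field K] [Fintype n] [DecidableEq n]
    {A : Matrix n n K} (h : A.rank = Fintype.card n) : A.det ≠ 0 := by
  have hrange : LinearMap.range A.mulVecLin = ⊤ :=
    Submodule.eq_top_of_finrank_eq (h.trans (Module.finrank_fintype_fun_eq_card K).symm)
  have hsurj : Function.Surjective A.mulVec := LinearMap.range_eq_top.mp hrange
  exact ((A.isUnit_iff_isUnit_det).mp (mulVec_surjective_iff_isUnit.mp hsurj)).ne_zero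

section DeleteLastColumn

variable {R : Type*} [CommRing R] {m : ℕ} {A : Matrix (Fin m) (Fin (m + 1)) R}

lemma Matrix.eq_submatrix_castSucc_mul (hsum : ∀ i, ∑ j, A i j = 0) :
    A = A.submatrix id Fin.castSucc *
      of fun i j => Fin.lastCases (motive := fun _ => R) (-1)
        (fun j' => (1 : Matrix (Fin m) (Fin m) R) i j') j := by
  refine Matrix.ext fun i j => ?_
  rw [Matrix.mul_apply]
  induction j using Fin.lastCases with
  | last =>
    have := hsum i
    rw [Fin.sum_univ_castSucc] at this
    simp [eq_neg_of_add_eq_zero_right this]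
  | cast j => simp [Matrix.one_apply]

lemma Matrix.rank_le_rank_submatrix_castSucc [StrongRankCondition R]
    (hsum : ∀ i, ∑ j, A i j = 0) : A.rank ≤ (A.submatrix id Fin.castSucc).rank := by
  conv_lhs => rw [A.eq_submatrix_castSucc_mul hsum]
  exact rank_mul_le_left _ _

lemma Matrix.submatrix_castSucc_mulVec (hsum : ∀ i, ∑ j, A i j = 0) (y : Fin (m + 1) → R) :
    A.submatrix id Fin.castSucc *ᵥ (fun j => y j.castSucc - y (Fin.last m)) = A *ᵥ y := by
  ext i
  have := hsum i
  rw [Fin.sum_univ_castSucc] at this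
  simp only [mulVec, dotProduct, submatrix_apply, id, mul_sub, Finset.sum_sub_distrib,
    ← Finset.sum_mul, Fin.sum_univ_castSucc (fun j => A i j * y j)]
  rw [eq_neg_of_add_eq_zero_left this]
  ring

end DeleteLastColumn

lemma Matrix.det_submatrix_castSucc_ne_zero {m : ℕ} {A : Matrix (Fin m) (Fin (m + 1)) ℤ}
    (hrank : (A.map ((↑) : ℤ → ℚ)).rank = m) (hsum : ∀ i, ∑ j, A i j = 0) :
    (A.submatrix id Fin.castSucc).det ≠ 0 := by
  have hsumℚ : ∀ i, ∑ j, A.map ((↑) : ℤ → ℚ) i j = 0 := fun i => by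
    simp [← Int.cast_sum, hsum i]
  have hB : ((A.submatrix id Fin.castSucc).map ((↑) : ℤ → ℚ)).rank = m :=
    le_antisymm (rank_le_width _)
      (hrank.symm.trans_le (rank_le_rank_submatrix_castSucc hsumℚ))
  have := det_ne_zero_of_rank_eq_card (hB.trans (Fintype.card_fin m).symm)
  rwa [← Int.cast_det, Int.cast_ne_zero] at this

lemma Matrix.dvd_det_mul_of_dvd_mulVec {R ι : Type*} [CommRing R] [Fintype ι] [DecidableEq ι]
    (B : Matrix ι ι R) {d : R} {z : ι → R} (hBz : ∀ i, d ∣ (B *ᵥ z) i) (j : ι) :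
    d ∣ B.det * z j := by
  have : B.det • z = B.adjugate *ᵥ (B *ᵥ z) := by
    rw [mulVec_mulVec, adjugate_mul, smul_mulVec, one_mulVec]
  rw [← smul_eq_mul, ← Pi.smul_apply, this]
  exact Finset.dvd_sum fun i _ => (hBz i).mul_left _

lemma Int.natCast_dvd_of_forall_dvd_mul {ι : Type*} {n : ℕ} {D : ℤ} {z : ι → ℤ}
    (hdvd : ∀ j, (n : ℤ) ∣ D * z j)
    (hz : ∀ p : ℕ, p.Prime → p ∣ n → ∃ j, ¬ (p : ℤ) ∣ z j) :
    (n : ℤ) ∣ D := by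
  rw [Int.natCast_dvd, Nat.dvd_iff_prime_pow_dvd_dvd]
  intro p k hp hpk
  rcases k.eq_zero_or_pos with rfl | hk
  · simp
  obtain ⟨j, hj⟩ := hz p hp ((dvd_pow_self p hk.ne').trans hpk)
  have hpkD : (p : ℤ) ^ k ∣ D * z j := by
    exact_mod_cast (Int.natCast_dvd_natCast.mpr hpk).trans (hdvd j)
  have := (Nat.prime_iff_prime_int.mp hp).pow_dvd_of_dvd_mul_right k hj hpkD
  exact Int.natCast_dvd.mp (by exact_mod_cast this)

lemma nEffective.exists_not_dvd_sub_last {n m : ℕ} {y : Fin (m + 1) → ℤ} (hy : nEffective n y)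
    (p : ℕ) (hp : p.Prime) (hpn : p ∣ n) :
    ∃ j : Fin m, ¬ (p : ℤ) ∣ y j.castSucc - y (Fin.last m) := by
  by_contra! H
  have hlast : ∀ c, y c ≡ y (Fin.last m) [ZMOD p] :=
    Fin.lastCases rfl fun j => (Int.modEq_iff_dvd.mpr (H j)).symm
  exact hy p hp hpn fun a b => (hlast a).trans (hlast b).symm

lemma abs_det_submatrix_castSucc_le_two_pow {m : ℕ} {A : Matrix (Fin m) (Fin (m + 1)) ℤ}
    (hsum : ∀ i, ∑ j, A i j = 0) (hrows : ∀ i, admissibleRow (A i)) :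
    |(A.submatrix id Fin.castSucc).det| ≤ 2 ^ m := by
  choose a b c d hA using fun i => (hrows i).exists_eq_single_sub_add_single_sub (hsum i)
  let U : Matrix (Fin m) (Fin m) ℤ :=
    of fun i => (Pi.single (a i) 1 - Pi.single (c i) 1) ∘ Fin.castSucc
  let V : Matrix (Fin m) (Fin m) ℤ :=
    of fun i => (Pi.single (b i) 1 - Pi.single (d i) 1) ∘ Fin.castSucc
  have hUV : A.submatrix id Fin.castSucc = U + V := by
    ext i j
    simp [U, V, congrFun (hA i) j.castSucc]
  rw [hUV]
  exact abs_det_add_le_two_pow U V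
    (fun i => (IsIncidenceRow.single_sub_single _ _).comp (Fin.castSucc_injective m))
    (fun i => (IsIncidenceRow.single_sub_single _ _).comp (Fin.castSucc_injective m))

/- Here `l = m + 1`, so `A` is an `(l-1) × l` matrix with `l - 1 = m`. -/
theorem stmt_13_general (n : ℕ) (m : ℕ)
    (A : Matrix (Fin m) (Fin (m + 1)) ℤ)
    (hrank : (A.map ((↑) : ℤ → ℚ)).rank = m)
    (hsum : ∀ i, ∑ j, A i j = 0)
    (hrows : ∀ i, admissibleRow (A i))
    (hsol : ∃ y : Fin (m + 1) → ℤ, nEffective n y ∧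
      ∀ i, (∑ j, A i j * y j) ≡ 0 [ZMOD (n : ℤ)]) :
    n ≤ 2 ^ m := by
  obtain ⟨y, hy, hAy⟩ := hsol
  set B := A.submatrix id Fin.castSucc
  have hBz : ∀ i, (n : ℤ) ∣ (B *ᵥ fun j => y j.castSucc - y (Fin.last m)) i := fun i => by
    rw [submatrix_castSucc_mulVec hsum]
    exact Int.modEq_zero_iff_dvd.mp (hAy i)
  have hdvd : (n : ℤ) ∣ B.det :=
    Int.natCast_dvd_of_forall_dvd_mul (B.dvd_det_mul_of_dvd_mulVec hBz)
      hy.exists_not_dvd_sub_last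
  have hle : (n : ℤ) ≤ |B.det| :=
    Int.le_of_dvd (abs_pos.mpr (det_submatrix_castSucc_ne_zero hrank hsum))
      ((dvd_abs _ _).mpr hdvd)
  exact_mod_cast hle.trans (abs_det_submatrix_castSucc_le_two_pow hsum hrows)

theorem stmt_13 (n : ℕ) (hn : 2 ≤ n) (m : ℕ)
    (A : Matrix (Fin m) (Fin (m + 1)) ℤ)
    (hrank : (A.map ((↑) : ℤ → ℚ)).rank = m)
    (hsum : ∀ i, ∑ j, A i j = 0)
    (hrows : ∀ i, admissibleRow (A i))
    (hsol : ∃ y : Fin (m + 1) → ℤ, nEffective n y ∧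
      ∀ i, (∑ j, A i j * y j) ≡ 0 [ZMOD (n : ℤ)]) :
    n ≤ 2 ^ m :=
  stmt_13_general n m A hrank hsum hrows hsol
end
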